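/- Shared stabilizers force equal orbits of rows: Let G act transitively on {1,...,m} and on {1,...,m'}, with equivariance constraints ρ(g)W = Wρ'(g) and σ(g)W' = W'ρ'(g) for matrices W (m×d) and W' (m'×d). Suppose row k of W equals row k' of W', and suppose both systems are irreducible (no two distinct rows within W are equal and no two distinct rows within W' are equal). Then Stab_G(k) = Stab_G(k') as subgroups of G. -/
import Mathlib


/-- The `m × m` permutation matrix of `σ`, acting by `(P_σ x)_i = x_{σ⁻¹ i}`. -/
def permMat {m : ℕ} (σ : Equiv.Perm (Fin m)) : Matrix (Fin m) (Fin m) ℝ :=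
  Matrix.of fun i j => if σ j = i then (1 : ℝ) else 0


lemma permMat_mul_apply {m d : ℕ} (τ : Equiv.Perm (Fin m)) (W : Matrix (Fin m) (Fin d) ℝ)
    (i : Fin m) (j : Fin d) : (permMat τ * W) i j = W (τ⁻¹ i) j := by
  simp only [permMat, Matrix.mul_apply, Matrix.of_apply, ite_mul, one_mul, zero_mul]
  rw [Finset.sum_eq_single (τ⁻¹ i)]
  · simp
  · intro b _ hb
    rw [if_neg]
    intro h
    exact hb (Equiv.eq_symm_apply τ |>.mpr h)
  · simp

lemma stab_aux {G : Type*} [Group G] {m m' d : ℕ}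
    (π : G →* Equiv.Perm (Fin m)) (σ : G →* Equiv.Perm (Fin m'))
    (ρ' : G →* Matrix.GeneralLinearGroup (Fin d) ℝ)
    (W : Matrix (Fin m) (Fin d) ℝ) (W' : Matrix (Fin m') (Fin d) ℝ)
    (hWequiv : ∀ g : G, permMat (π g) * W = W * (ρ' g : Matrix (Fin d) (Fin d) ℝ))
    (hW'equiv : ∀ g : G, permMat (σ g) * W' = W' * (ρ' g : Matrix (Fin d) (Fin d) ℝ))
    (k : Fin m) (k' : Fin m')
    (hrow : ∀ j : Fin d, W k j = W' k' j)
    (hW'irr : ∀ i i' : Fin m', (∀ j, W' i j = W' i' j) → i = i')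
    (g : G) (hg : π g k = k) : σ g k' = k' := by
  have h1 : ∀ j, W k j = ∑ l, W k l * (ρ' g : Matrix (Fin d) (Fin d) ℝ) l j := by
    intro j
    have := congrFun (congrFun (hWequiv g) k) j
    rw [permMat_mul_apply] at this
    have hk : (π g)⁻¹ k = k := by
      have : (π g)⁻¹ (π g k) = (π g)⁻¹ k := by rw [hg]
      simpa using this.symm
    rw [hk] at this
    simpa [Matrix.mul_apply] using this
  have h2 : ∀ j, W' ((σ g)⁻¹ k') j = W' k' j := by
    intro j
    have := congrFun (congrFun (hW'equiv g) k') j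
    rw [permMat_mul_apply] at this
    rw [this]
    simp only [Matrix.mul_apply]
    calc ∑ l, W' k' l * (ρ' g : Matrix (Fin d) (Fin d) ℝ) l j
        = ∑ l, W k l * (ρ' g : Matrix (Fin d) (Fin d) ℝ) l j := by
          refine Finset.sum_congr rfl fun l _ => by rw [hrow l]
      _ = W k j := (h1 j).symm
      _ = W' k' j := hrow j
  have := hW'irr _ _ h2
  have : σ g ((σ g)⁻¹ k') = σ g k' := by rw [this]
  simpa using this.symm

/-- Shared stabilizers: Let `G` act transitively on `{1,…,m}`
via `π` and on `{1,…,m'}` via `σ`, with equivariant matrices `W` (`m × d`) and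
`W'` (`m' × d`) for the same representation `ρ'` on `ℝᵈ`. If row `k` of `W`
equals row `k'` of `W'`, and no two distinct rows of `W` (resp. of `W'`) are
equal, then the stabilizer of `k` (under `π`) equals the stabilizer of `k'`
(under `σ`). -/
theorem stmt_14 {G : Type*} [Group G] {m m' d : ℕ}
    (π : G →* Equiv.Perm (Fin m)) (σ : G →* Equiv.Perm (Fin m'))
    (hπtrans : ∀ i j : Fin m, ∃ g : G, π g i = j)
    (hσtrans : ∀ i j : Fin m', ∃ g : G, σ g i = j)
    (ρ' : G →* Matrix.GeneralLinearGroup (Fin d) ℝ)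
    (W : Matrix (Fin m) (Fin d) ℝ) (W' : Matrix (Fin m') (Fin d) ℝ)
    (hWequiv : ∀ g : G, permMat (π g) * W = W * (ρ' g : Matrix (Fin d) (Fin d) ℝ))
    (hW'equiv : ∀ g : G, permMat (σ g) * W' = W' * (ρ' g : Matrix (Fin d) (Fin d) ℝ))
    (k : Fin m) (k' : Fin m')
    (hrow : ∀ j : Fin d, W k j = W' k' j)
    (hWirr : ∀ i i' : Fin m, (∀ j, W i j = W i' j) → i = i')
    (hW'irr : ∀ i i' : Fin m', (∀ j, W' i j = W' i' j) → i = i') :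
    ∀ g : G, π g k = k ↔ σ g k' = k' := by
  intro g
  constructor
  · exact stab_aux π σ ρ' W W' hWequiv hW'equiv k k' hrow hW'irr g
  · exact stab_aux σ π ρ' W' W hW'equiv hWequiv k' k (fun j => (hrow j).symm) hWirr g
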